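/- Let b ≥ a ≥ 0 with a possibly zero, c > 0, K ≥ 0, and k a natural number. Then there exists a polynomial P with nonnegative coefficients (depending on k) such that ∫_a^b (1/max(c,x)) · (ln₊(K/x))^k dx ≤ P(ln₊(max(K,b)/max(c,a))). -/

import Mathlib

/-!
Put `m = max c a`. Since `ln₊ (K / x) ≤ ln₊ (K / m) + ln₊ (m / x)`, the integrand is at most
`2ᵏ ln₊ (K / m)ᵏ / max c x` plus a term that vanishes unless `a < x < m`, which forces `m = c`.
The first part integrates to at most `2ᵏ ln₊ (K / m)ᵏ (1 + ln₊ (b / m))`: on `[a, m]` the weight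
`1 / max c x` is at most `1 / c` over a length at most `c`, and beyond `m` it is `1 / x`.
The second part lives on `(0, c]`, where `ln₊ (c / x)ᵏ ≤ (2k)ᵏ √(c / x)` dominates it by
`(2k)ᵏ / √(c x)`, whose integral over `(0, c]` is `2` whatever `c` is.
-/

/-- The positive part of the logarithm: `ln₊ x = max (ln x) 0`. -/
noncomputable def lnp (x : ℝ) : ℝ := max (Real.log x) 0

open MeasureTheory Real Set Polynomial

lemma lnp_nonneg (x : ℝ) : 0 ≤ lnp x := le_max_right _ _

lemma lnp_eq_log {x : ℝ} (hx : 1 ≤ x) : lnp x = log x :=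
  max_eq_left (log_nonneg hx)

lemma lnp_le_lnp {x y : ℝ} (hx : 0 ≤ x) (hxy : x ≤ y) : lnp x ≤ lnp y := by
  rcases hx.eq_or_lt with rfl | hx
  · simp [lnp]
  · exact max_le_max_right _ (log_le_log hx hxy)

lemma lnp_mul_le {x y : ℝ} (hx : 0 ≤ x) (hy : 0 ≤ y) : lnp (x * y) ≤ lnp x + lnp y := by
  rcases hx.eq_or_lt with rfl | hx
  · simp [lnp]
  rcases hy.eq_or_lt with rfl | hy
  · simp [lnp]
  rw [lnp, log_mul hx.ne' hy.ne']
  exact max_le (add_le_add (le_max_left _ _) (le_max_left _ _))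
    (add_nonneg (lnp_nonneg _) (lnp_nonneg _))

lemma lnp_pow_le_mul_rpow (k : ℕ) {ε u : ℝ} (hε : 0 < ε) (hu : 1 ≤ u) :
    lnp u ^ k ≤ (k / ε) ^ k * u ^ ε := by
  have hu0 : 0 < u := one_pos.trans_le hu
  rcases k.eq_zero_or_pos with rfl | hk
  · simpa using one_le_rpow hu hε.le
  have hδ : 0 < ε / k := by positivity
  have hlog : log u ≤ (k / ε) * u ^ (ε / k) := by
    simpa [div_div_eq_mul_div, div_eq_mul_inv, mul_comm] using log_le_rpow_div hu0.le hδ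
  calc lnp u ^ k ≤ ((k / ε) * u ^ (ε / k)) ^ k := by
        rw [lnp_eq_log hu]; exact pow_le_pow_left₀ (log_nonneg hu) hlog k
    _ = (k / ε) ^ k * u ^ ε := by
        rw [mul_pow, ← rpow_natCast (u ^ (ε / k)), ← rpow_mul hu0.le,
          div_mul_cancel₀ _ (by positivity)]

lemma add_pow_le_two_pow_mul {u v : ℝ} (hu : 0 ≤ u) (hv : 0 ≤ v) (k : ℕ) :
    (u + v) ^ k ≤ 2 ^ k * (u ^ k + v ^ k) :=
  (add_pow_le hu hv k).trans <| mul_le_mul_of_nonneg_right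
    (pow_le_pow_right₀ one_le_two (k.sub_le 1)) (by positivity)

lemma intervalIntegral_mono_of_nonneg {f g : ℝ → ℝ} {a b : ℝ} (hab : a ≤ b)
    (hf : ∀ x ∈ Ioc a b, 0 ≤ f x) (hg : IntervalIntegrable g volume a b)
    (hfg : ∀ x ∈ Ioc a b, f x ≤ g x) : ∫ x in a..b, f x ≤ ∫ x in a..b, g x := by
  rw [intervalIntegral.integral_of_le hab, intervalIntegral.integral_of_le hab]
  exact integral_mono_of_nonneg ((ae_restrict_iff' measurableSet_Ioc).2 (.of_forall hf))
    hg.1 ((ae_restrict_iff' measurableSet_Ioc).2 (.of_forall hfg))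

section

variable {c : ℝ}

lemma inv_sqrt_mul_eqOn (hc : 0 < c) :
    EqOn (fun x => (√(c * x))⁻¹) (fun x => (√c)⁻¹ * x ^ (-(1 / 2) : ℝ)) (Ioi 0) := by
  intro x hx
  dsimp only
  rw [sqrt_mul hc.le, mul_inv, rpow_neg (le_of_lt hx), sqrt_eq_rpow x]

lemma integrable_indicator_inv_sqrt_mul (hc : 0 < c) :
    Integrable ((Ioc 0 c).indicator fun x => (√(c * x))⁻¹) := by
  refine (integrable_indicator_iff measurableSet_Ioc).2 <| IntegrableOn.congr_fun ?_
    ((inv_sqrt_mul_eqOn hc).symm.mono Ioc_subset_Ioi_self) measurableSet_Ioc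
  exact (intervalIntegrable_iff_integrableOn_Ioc_of_le hc.le).1
    ((intervalIntegral.intervalIntegrable_rpow' (by norm_num)).const_mul _)

lemma integral_inv_sqrt_mul (hc : 0 < c) : ∫ x in Ioc 0 c, (√(c * x))⁻¹ = 2 := by
  rw [setIntegral_congr_fun measurableSet_Ioc ((inv_sqrt_mul_eqOn hc).mono Ioc_subset_Ioi_self),
    integral_const_mul, ← intervalIntegral.integral_of_le hc.le,
    integral_rpow (Or.inl (by norm_num)), zero_rpow (by norm_num),
    show -(1 / 2) + 1 = (1 / 2 : ℝ) by norm_num, ← sqrt_eq_rpow, sub_zero]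
  field_simp

lemma integral_indicator_inv_sqrt_mul_le (hc : 0 < c) {a b : ℝ} (hab : a ≤ b) :
    ∫ x in a..b, (Ioc 0 c).indicator (fun x => (√(c * x))⁻¹) x ≤ 2 := by
  have hnonneg : 0 ≤ (Ioc 0 c).indicator (fun x => (√(c * x))⁻¹) :=
    indicator_nonneg fun _ _ => by positivity
  rw [intervalIntegral.integral_of_le hab]
  calc _ ≤ ∫ x, (Ioc 0 c).indicator (fun x => (√(c * x))⁻¹) x :=
        setIntegral_le_integral (integrable_indicator_inv_sqrt_mul hc) (.of_forall hnonneg)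
    _ = 2 := by rw [integral_indicator measurableSet_Ioc, integral_inv_sqrt_mul hc]

lemma inv_mul_lnp_div_pow_le (k : ℕ) (hc : 0 < c) {x : ℝ} (hx : 0 < x) (hxc : x ≤ c) :
    c⁻¹ * lnp (c / x) ^ k ≤ (2 * k) ^ k * (√(c * x))⁻¹ := by
  have h := lnp_pow_le_mul_rpow k (by norm_num : (0 : ℝ) < 1 / 2) ((one_le_div hx).2 hxc)
  rw [← sqrt_eq_rpow, div_div_eq_mul_div, div_one, mul_comm (k : ℝ)] at h
  calc c⁻¹ * lnp (c / x) ^ k ≤ c⁻¹ * ((2 * k) ^ k * √(c / x)) := by gcongr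
    _ = (2 * k) ^ k * (√(c * x))⁻¹ := by
      rw [sqrt_div hc.le, sqrt_mul hc.le]
      field_simp
      rw [sq_sqrt hc.le]

lemma continuous_inv_max (hc : 0 < c) : Continuous fun x => (max c x)⁻¹ :=
  (continuous_const.max continuous_id).inv₀ fun x => (hc.trans_le (le_max_left c x)).ne'

lemma integral_inv_max_le_one (hc : 0 < c) {a b : ℝ} (ha : 0 ≤ a) (hab : a ≤ b)
    (hb : b ≤ max c a) : ∫ x in a..b, (max c x)⁻¹ ≤ 1 := by
  calc ∫ x in a..b, (max c x)⁻¹ ≤ ∫ x in a..b, c⁻¹ :=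
        intervalIntegral.integral_mono_on hab
          ((continuous_inv_max hc).intervalIntegrable _ _)
          intervalIntegrable_const fun x _ => inv_anti₀ hc (le_max_left c x)
    _ = (b - a) / c := by simp [div_eq_mul_inv]
    _ ≤ 1 := by
      have : max c a ≤ c + a := max_le (by linarith) (by linarith)
      exact (div_le_one hc).2 (by linarith)

lemma integral_inv_max_of_le (hc : 0 < c) {m b : ℝ} (hcm : c ≤ m) (hmb : m ≤ b) :
    ∫ x in m..b, (max c x)⁻¹ = log (b / m) := by
  have hm : 0 < m := hc.trans_le hcm
  rw [← integral_inv_of_pos hm (hm.trans_le hmb)]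
  refine intervalIntegral.integral_congr fun x hx => ?_
  rw [uIcc_of_le hmb] at hx
  simp only [max_eq_right (hcm.trans hx.1)]

lemma integral_inv_max_le (hc : 0 < c) {a b : ℝ} (ha : 0 ≤ a) (hab : a ≤ b) :
    ∫ x in a..b, (max c x)⁻¹ ≤ 1 + lnp (b / max c a) := by
  rcases le_total b (max c a) with hb | hb
  · linarith [integral_inv_max_le_one hc ha hab hb, lnp_nonneg (b / max c a)]
  have hint := (continuous_inv_max hc).intervalIntegrable (μ := volume)
  rw [← intervalIntegral.integral_add_adjacent_intervals (hint a (max c a)) (hint _ b),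
    integral_inv_max_of_le hc (le_max_left c a) hb]
  exact add_le_add (integral_inv_max_le_one hc ha (le_max_right c a) le_rfl) (le_max_left _ _)

lemma inv_max_mul_lnp_div_pow_le (k : ℕ) (hc : 0 < c) {a K x : ℝ} (ha : 0 ≤ a) (hK : 0 ≤ K)
    (hax : a < x) :
    (max c x)⁻¹ * lnp (K / x) ^ k ≤ 2 ^ k * lnp (K / max c a) ^ k * (max c x)⁻¹ +
      2 ^ k * (2 * k) ^ k * (Ioc 0 c).indicator (fun x => (√(c * x))⁻¹) x := by
  have hx : 0 < x := ha.trans_lt hax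
  have hm : 0 < max c a := hc.trans_le (le_max_left c a)
  have hind : 0 ≤ (Ioc 0 c).indicator (fun x => (√(c * x))⁻¹) x :=
    indicator_nonneg (fun _ _ => by positivity) x
  by_cases hmx : max c a ≤ x
  · have hlnp : lnp (K / x) ≤ lnp (K / max c a) :=
      lnp_le_lnp (by positivity) (div_le_div_of_nonneg_left hK hm hmx)
    calc (max c x)⁻¹ * lnp (K / x) ^ k ≤ 1 * lnp (K / max c a) ^ k * (max c x)⁻¹ := by
          rw [one_mul, mul_comm]; gcongr; exact lnp_nonneg _
      _ ≤ 2 ^ k * lnp (K / max c a) ^ k * (max c x)⁻¹ := by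
          gcongr
          · exact pow_nonneg (lnp_nonneg _) k
          · exact one_le_pow₀ (one_le_two : (1 : ℝ) ≤ 2)
      _ ≤ _ := le_add_of_nonneg_right (by positivity)
  have hac : a < c := by
    by_contra! hca
    exact hmx ((max_eq_right hca).trans_le hax.le)
  have hxc : x < c := by rwa [max_eq_left hac.le, not_le] at hmx
  rw [max_eq_left hac.le, max_eq_left hxc.le,
    indicator_of_mem (show x ∈ Ioc 0 c from ⟨hx, hxc.le⟩)]
  have hsplit : lnp (K / x) ≤ lnp (K / c) + lnp (c / x) := by
    rw [← div_mul_div_cancel₀ hc.ne']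
    exact lnp_mul_le (by positivity) (by positivity)
  calc c⁻¹ * lnp (K / x) ^ k ≤ c⁻¹ * (2 ^ k * (lnp (K / c) ^ k + lnp (c / x) ^ k)) := by
        gcongr
        exact (pow_le_pow_left₀ (lnp_nonneg _) hsplit k).trans
          (add_pow_le_two_pow_mul (lnp_nonneg _) (lnp_nonneg _) k)
    _ = 2 ^ k * lnp (K / c) ^ k * c⁻¹ + 2 ^ k * (c⁻¹ * lnp (c / x) ^ k) := by ring
    _ ≤ 2 ^ k * lnp (K / c) ^ k * c⁻¹ + 2 ^ k * ((2 * k) ^ k * (√(c * x))⁻¹) :=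
        add_le_add le_rfl (mul_le_mul_of_nonneg_left (inv_mul_lnp_div_pow_le k hc hx hxc.le)
          (by positivity))
    _ = _ := by ring

lemma integral_inv_max_mul_lnp_div_pow_le (k : ℕ) (hc : 0 < c) {a b K : ℝ} (ha : 0 ≤ a)
    (hab : a ≤ b) (hK : 0 ≤ K) :
    ∫ x in a..b, (max c x)⁻¹ * lnp (K / x) ^ k ≤
      2 ^ k * lnp (K / max c a) ^ k * (1 + lnp (b / max c a)) + 2 ^ k * (2 * k) ^ k * 2 := by
  set A := 2 ^ k * lnp (K / max c a) ^ k
  set B := 2 ^ k * (2 * k : ℝ) ^ k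
  set g := (Ioc 0 c).indicator fun x => (√(c * x))⁻¹
  have hinv : IntervalIntegrable (fun x => A * (max c x)⁻¹) volume a b :=
    ((continuous_inv_max hc).intervalIntegrable a b).const_mul _
  have hg : IntervalIntegrable (fun x => B * g x) volume a b :=
    (integrable_indicator_inv_sqrt_mul hc).intervalIntegrable.const_mul _
  have hA : 0 ≤ A := mul_nonneg (by positivity) (pow_nonneg (lnp_nonneg _) k)
  calc ∫ x in a..b, (max c x)⁻¹ * lnp (K / x) ^ k
      ≤ ∫ x in a..b, (A * (max c x)⁻¹ + B * g x) :=
        intervalIntegral_mono_of_nonneg hab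
          (fun x _ => mul_nonneg (inv_nonneg.2 (hc.le.trans (le_max_left c x)))
            (pow_nonneg (lnp_nonneg _) k))
          (hinv.add hg) fun x hx => inv_max_mul_lnp_div_pow_le k hc ha hK hx.1
    _ = A * (∫ x in a..b, (max c x)⁻¹) + B * ∫ x in a..b, g x := by
        rw [intervalIntegral.integral_add hinv hg, intervalIntegral.integral_const_mul,
          intervalIntegral.integral_const_mul]
    _ ≤ A * (1 + lnp (b / max c a)) + B * 2 := by
        gcongr
        · exact integral_inv_max_le hc ha hab
        · exact integral_indicator_inv_sqrt_mul_le hc hab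

end

/-- Lemma (Λ integration, part 3): for `k : ℕ` there is a polynomial `P` with nonnegative
coefficients (depending on `k`) such that for all `b ≥ a ≥ 0`, `c > 0` and `K ≥ 0`,
`∫_a^b (1/max(c,x)) (ln₊(K/x))^k dx ≤ P(ln₊(max(K,b)/max(c,a)))`. -/
theorem lambda_integration_three (k : ℕ) :
    ∃ P : Polynomial ℝ, (∀ n, 0 ≤ P.coeff n) ∧
      ∀ a b c K : ℝ, 0 ≤ a → a ≤ b → 0 < c → 0 ≤ K →
        (∫ x in a..b, (1 / max c x) * (lnp (K / x)) ^ k)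
          ≤ P.eval (lnp (max K b / max c a)) := by
  refine ⟨C (2 ^ k : ℝ) * (X ^ (k + 1) + X ^ k + C (2 * (2 * (k : ℝ)) ^ k)), fun n => ?_, ?_⟩
  · simp only [coeff_C_mul, coeff_add, coeff_X_pow, coeff_C]
    split_ifs <;> positivity
  intro a b c K ha hab hc hK
  set L := lnp (max K b / max c a)
  have hm : 0 < max c a := hc.trans_le (le_max_left c a)
  have hKL : lnp (K / max c a) ≤ L := lnp_le_lnp (by positivity) (by gcongr; exact le_max_left K b)
  have hbL : lnp (b / max c a) ≤ L :=
    lnp_le_lnp (div_nonneg (ha.trans hab) hm.le) (by gcongr; exact le_max_right K b)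
  simp only [one_div]
  calc ∫ x in a..b, (max c x)⁻¹ * lnp (K / x) ^ k
      ≤ 2 ^ k * lnp (K / max c a) ^ k * (1 + lnp (b / max c a)) + 2 ^ k * (2 * k) ^ k * 2 :=
        integral_inv_max_mul_lnp_div_pow_le k hc ha hab hK
    _ ≤ 2 ^ k * L ^ k * (1 + L) + 2 ^ k * (2 * k) ^ k * 2 := by
        have hK0 := lnp_nonneg (K / max c a)
        have hb0 := lnp_nonneg (b / max c a)
        have hL0 : 0 ≤ L := lnp_nonneg _
        gcongr
    _ = _ := by
        simp only [eval_add, eval_mul, eval_C, eval_pow, eval_X]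
        ring
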